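/- Two relational MAX-queries q(x̄; MAX(y)) ← R and q′(x̄; MAX(y′)) ← R′ are equivalent if and only if the nonaggregate conjunctive queries q̃(x̄, y) ← R and q̃′(x̄, y′) ← R′ are set-equivalent. -/
import Mathlib


namespace CQMax

abbrev Var := ℕ

inductive Term where
  | var : Var → Term
  | const : ℚ → Term
deriving DecidableEq

def Term.eval (γ : Var → ℚ) : Term → ℚ
  | .var v => γ v
  | .const c => c

def Term.vars : Term → Finset Var
  | .var v => {v}
  | .const _ => ∅

def termListVars (l : List Term) : Finset Var := l.foldr (fun t s => t.vars ∪ s) ∅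

structure Atom (Rel : Type) where
  rel : Rel
  args : List Term
deriving DecidableEq

variable {Rel : Type} [DecidableEq Rel]

def Atom.vars (a : Atom Rel) : Finset Var := termListVars a.args

def atomsVars (R : Finset (Atom Rel)) : Finset Var := R.sup Atom.vars

/-- A database assigns to every relation symbol a set of tuples over `ℚ`. -/
abbrev Database (Rel : Type) := Rel → Set (List ℚ)

def FiniteDB (D : Database Rel) : Prop := ∀ p, (D p).Finite

def Atom.satisfied (D : Database Rel) (γ : Var → ℚ) (a : Atom Rel) : Prop :=
  a.args.map (Term.eval γ) ∈ D a.rel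

/-- The result of the relational MAX-query `q(x̄; MAX(y)) ← R` over `D`: the pairs
`(γ(x̄), m)` for satisfying assignments `γ`, where `m` is the maximum of `γ'(y)` over
all satisfying assignments `γ'` agreeing with `γ` on `x̄`. -/
def maxResult (x : List Var) (y : Var) (R : Finset (Atom Rel)) (D : Database Rel) :
    Set (List ℚ × ℚ) :=
  {r | ∃ γ : Var → ℚ, (∀ a ∈ R, a.satisfied D γ) ∧ r.1 = x.map γ ∧
       IsGreatest {c : ℚ | ∃ γ' : Var → ℚ, (∀ a ∈ R, a.satisfied D γ') ∧
          x.map γ' = r.1 ∧ γ' y = c} r.2}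

/-- The result of the nonaggregate conjunctive query `q̃(h) ← R` over `D`
under set semantics. -/
def setResult (h : List Var) (R : Finset (Atom Rel)) (D : Database Rel) : Set (List ℚ) :=
  {t | ∃ γ : Var → ℚ, (∀ a ∈ R, a.satisfied D γ) ∧ t = h.map γ}


lemma mem_termListVars {v : Var} {l : List Term} :
    v ∈ termListVars l ↔ Term.var v ∈ l := by
  induction l with
  | nil => simp [termListVars]
  | cons s l ih =>
    have hrw : termListVars (s :: l) = s.vars ∪ termListVars l := rfl
    rw [hrw, Finset.mem_union, ih, List.mem_cons]
    cases s with
    | var w => simp [Term.vars, eq_comm]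
    | const c => simp [Term.vars]

lemma mem_atomsVars {v : Var} {R : Finset (Atom Rel)} :
    v ∈ atomsVars R ↔ ∃ a ∈ R, Term.var v ∈ a.args := by
  simp [atomsVars, Finset.mem_sup, Atom.vars, mem_termListVars]

def atomConsts (a : Atom Rel) : Finset ℚ :=
  (a.args.filterMap fun s => match s with | .const c => some c | _ => none).toFinset

lemma mem_atomConsts {e : ℚ} {a : Atom Rel} (hmem : Term.const e ∈ a.args) :
    e ∈ atomConsts a := by
  simp only [atomConsts, List.mem_toFinset, List.mem_filterMap]
  exact ⟨Term.const e, hmem, rfl⟩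

lemma aux_subset (x : List Var) (y y' : Var) (R R' : Finset (Atom Rel))
    (hx : ∀ v ∈ x, v ∈ atomsVars R) (hy : y ∈ atomsVars R)
    (hmax : ∀ D : Database Rel, FiniteDB D →
      maxResult x y R D ⊆ maxResult x y' R' D)
    (D : Database Rel) :
    setResult (x ++ [y]) R D ⊆ setResult (x ++ [y']) R' D := by
  classical
  rintro t ⟨γ, hγ, rfl⟩
  set V : Finset Var := atomsVars R with hV
  set consts : Finset ℚ := (R ∪ R').sup atomConsts with hconsts
  set B : ℚ := 1 + consts.sum (fun e => |e|) with hBdef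
  have hBgt : ∀ e ∈ consts, e < B := by
    intro e he
    have h1 : |e| ≤ consts.sum (fun e => |e|) :=
      Finset.single_le_sum (fun i _ => abs_nonneg i) he
    have h2 := le_abs_self e
    rw [hBdef]; linarith
  set M : ℕ := V.sup id with hM
  set γs : Var → ℚ := fun v => if v = y then B + ((M : ℚ) + 1) else B + (v : ℚ) with hγs
  have hB_le : ∀ v : Var, B ≤ γs v := by
    intro v
    have h0 : (0:ℚ) ≤ (v:ℚ) := by positivity
    have h1 : (0:ℚ) ≤ (M:ℚ) + 1 := by positivity
    simp only [hγs]
    split <;> linarith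
  have hγsy : γs y = B + ((M : ℚ) + 1) := by simp [hγs]
  have hγs_le : ∀ v ∈ V, γs v ≤ γs y := by
    intro v hv
    have hvM : v ≤ M := Finset.le_sup (f := id) hv
    by_cases hvy : v = y
    · rw [hvy]
    · have hc : (v:ℚ) ≤ (M:ℚ) := by exact_mod_cast hvM
      rw [hγsy]
      simp only [hγs, if_neg hvy]
      linarith
  have hinj : ∀ v ∈ V, ∀ w ∈ V, γs v = γs w → v = w := by
    intro v hv w hw hvw
    have hvM : (v:ℚ) ≤ (M:ℚ) := by exact_mod_cast Finset.le_sup (f := id) hv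
    have hwM : (w:ℚ) ≤ (M:ℚ) := by exact_mod_cast Finset.le_sup (f := id) hw
    by_cases h1 : v = y <;> by_cases h2 : w = y
    · rw [h1, h2]
    · exfalso
      simp only [hγs, if_pos h1, if_neg h2] at hvw
      linarith
    · exfalso
      simp only [hγs, if_neg h1, if_pos h2] at hvw
      linarith
    · simp only [hγs, if_neg h1, if_neg h2, add_right_inj] at hvw
      exact_mod_cast hvw
  set hfun : ℚ → ℚ :=
    fun q => if hq : ∃ v, v ∈ V ∧ γs v = q then γ hq.choose else q with hh
  have h_spec : ∀ v ∈ V, hfun (γs v) = γ v := by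
    intro v hv
    have hq : ∃ w, w ∈ V ∧ γs w = γs v := ⟨v, hv, rfl⟩
    simp only [hh, dif_pos hq]
    have h1 := hq.choose_spec
    rw [hinj _ h1.1 _ hv h1.2]
  have h_const : ∀ e ∈ consts, hfun e = e := by
    intro e he
    have hq : ¬ ∃ w, w ∈ V ∧ γs w = e := by
      rintro ⟨w, hw, hwe⟩
      have h1 := hB_le w
      rw [hwe] at h1
      exact absurd (hBgt e he) (not_lt.mpr h1)
    simp only [hh, dif_neg hq]
  have hconsts_mem : ∀ b ∈ R ∪ R', ∀ e : ℚ, Term.const e ∈ b.args → e ∈ consts := by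
    intro b hb e hmem
    have hsub : atomConsts b ⊆ consts := by
      rw [hconsts]
      exact Finset.le_sup (f := atomConsts) hb
    exact hsub (mem_atomConsts hmem)
  set Ds : Database Rel :=
    fun p => {l | ∃ b ∈ R, b.rel = p ∧ l = b.args.map (Term.eval γs)} with hDs
  have hDsfin : FiniteDB Ds := by
    intro p
    apply Set.Finite.subset (R.finite_toSet.image fun b => b.args.map (Term.eval γs))
    rintro l ⟨b, hb, _, rfl⟩
    exact ⟨b, hb, rfl⟩
  have hγs_sat : ∀ a ∈ R, a.satisfied Ds γs := by
    intro a ha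
    exact ⟨a, ha, rfl, rfl⟩
  have hterm : ∀ b ∈ R, ∀ s ∈ b.args, Term.eval γs s ≤ γs y := by
    intro b hb s hs
    cases s with
    | var w =>
      exact hγs_le w (mem_atomsVars.mpr ⟨b, hb, hs⟩)
    | const e =>
      have he : e ∈ consts := hconsts_mem b (Finset.mem_union_left _ hb) e hs
      have h1 := hBgt e he
      have h2 := hB_le y
      show e ≤ γs y
      linarith
  have hub : ∀ δ : Var → ℚ, (∀ a ∈ R, a.satisfied Ds δ) → δ y ≤ γs y := by
    intro δ hδ
    obtain ⟨a, ha, hya⟩ := mem_atomsVars.mp hy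
    have hsat := hδ a ha
    obtain ⟨b, hb, hrel, heq⟩ := hsat
    obtain ⟨i, hi, hgy⟩ := List.getElem_of_mem hya
    have hlen : a.args.length = b.args.length := by
      have hl := congrArg List.length heq
      simpa using hl
    have hib : i < b.args.length := hlen ▸ hi
    have h2 := congrArg (fun l => l[i]?) heq
    simp only [List.getElem?_map] at h2
    rw [List.getElem?_eq_getElem hi, List.getElem?_eq_getElem hib, hgy] at h2
    simp only [Option.map_some] at h2
    have h3 : δ y = Term.eval γs (b.args[i]) := by
      simpa [Term.eval] using h2
    rw [h3]
    exact hterm b hb _ (List.getElem_mem hib)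
  have hmem : ((x.map γs, γs y) : List ℚ × ℚ) ∈ maxResult x y R Ds := by
    refine ⟨γs, hγs_sat, rfl, ⟨⟨γs, hγs_sat, rfl, rfl⟩, ?_⟩⟩
    rintro c ⟨δ, hδ, -, rfl⟩
    exact hub δ hδ
  have hmem' := hmax Ds hDsfin hmem
  obtain ⟨-, -, -, hgr⟩ := hmem'
  obtain ⟨δ, hδsat, hδx, hδy⟩ := hgr.1
  refine ⟨hfun ∘ δ, ?_, ?_⟩
  · intro a ha
    have hsat := hδsat a ha
    obtain ⟨b, hb, hrel, heq⟩ := hsat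
    have hγb := hγ b hb
    have h2 := congrArg (List.map hfun) heq
    rw [List.map_map, List.map_map] at h2
    have e1 : a.args.map (hfun ∘ Term.eval δ) = a.args.map (Term.eval (hfun ∘ δ)) := by
      apply List.map_congr_left
      intro s hs
      cases s with
      | var w => rfl
      | const e =>
        have he : e ∈ consts := hconsts_mem a (Finset.mem_union_right _ ha) e hs
        simp [Term.eval, h_const e he]
    have e2 : b.args.map (hfun ∘ Term.eval γs) = b.args.map (Term.eval γ) := by
      apply List.map_congr_left
      intro s hs
      cases s with
      | var w =>
        have hw : w ∈ V := mem_atomsVars.mpr ⟨b, hb, hs⟩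
        simpa [Term.eval] using h_spec w hw
      | const e =>
        have he : e ∈ consts := hconsts_mem b (Finset.mem_union_left _ hb) e hs
        simp [Term.eval, h_const e he]
    rw [e1, e2] at h2
    show (a.args.map (Term.eval (hfun ∘ δ))) ∈ D a.rel
    rw [h2, ← hrel]
    exact hγb
  · have hx2 := congrArg (List.map hfun) hδx
    rw [List.map_map, List.map_map] at hx2
    have e3 : x.map (hfun ∘ γs) = x.map γ := by
      apply List.map_congr_left
      intro v hv
      exact h_spec v (hx v hv)
    have e4 : x.map (hfun ∘ δ) = x.map γ := by rw [hx2, e3]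
    have e5 : hfun (δ y') = γ y := by
      rw [hδy]
      exact h_spec y hy
    rw [List.map_append, List.map_append, e4]
    simp [Function.comp, e5]

/-- Two relational MAX-queries `q(x̄; MAX(y)) ← R` and
`q'(x̄; MAX(y')) ← R'` are equivalent if and only if the nonaggregate conjunctive
queries `q̃(x̄, y) ← R` and `q̃'(x̄, y') ← R'` are set-equivalent. -/
theorem max_equiv_iff_core_set_equiv
    (x : List Var) (y y' : Var) (R R' : Finset (Atom Rel))
    (hsafe : ∀ v ∈ x ++ [y], v ∈ atomsVars R)
    (hsafe' : ∀ v ∈ x ++ [y'], v ∈ atomsVars R') :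
    (∀ D : Database Rel, FiniteDB D → maxResult x y R D = maxResult x y' R' D) ↔
      (∀ D : Database Rel, FiniteDB D →
        setResult (x ++ [y]) R D = setResult (x ++ [y']) R' D) := by
  have hx : ∀ v ∈ x, v ∈ atomsVars R := fun v hv => hsafe v (List.mem_append_left _ hv)
  have hy : y ∈ atomsVars R :=
    hsafe y (List.mem_append_right _ (List.mem_singleton_self y))
  have hx' : ∀ v ∈ x, v ∈ atomsVars R' := fun v hv => hsafe' v (List.mem_append_left _ hv)
  have hy' : y' ∈ atomsVars R' :=
    hsafe' y' (List.mem_append_right _ (List.mem_singleton_self y'))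
  constructor
  · intro hmax D hD
    apply Set.Subset.antisymm
    · exact aux_subset x y y' R R' hx hy (fun D hD => (hmax D hD).subset) D
    · exact aux_subset x y' y R' R hx' hy' (fun D hD => (hmax D hD).symm.subset) D
  · intro hset D hD
    have key : ∀ t : List ℚ,
        {c : ℚ | ∃ γ' : Var → ℚ, (∀ a ∈ R, a.satisfied D γ') ∧ x.map γ' = t ∧ γ' y = c} =
        {c : ℚ | ∃ γ' : Var → ℚ, (∀ a ∈ R', a.satisfied D γ') ∧ x.map γ' = t ∧ γ' y' = c} := by
      intro t
      ext c
      constructor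
      · rintro ⟨γ', hγ', hxt, hyc⟩
        have hmem : t ++ [c] ∈ setResult (x ++ [y]) R D :=
          ⟨γ', hγ', by simp [hxt, hyc]⟩
        rw [hset D hD] at hmem
        obtain ⟨δ, hδ, heq⟩ := hmem
        rw [List.map_append] at heq
        obtain ⟨h1, h2⟩ := List.append_inj' heq (by simp)
        refine ⟨δ, hδ, h1.symm, ?_⟩
        simpa using h2.symm
      · rintro ⟨γ', hγ', hxt, hyc⟩
        have hmem : t ++ [c] ∈ setResult (x ++ [y']) R' D :=
          ⟨γ', hγ', by simp [hxt, hyc]⟩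
        rw [← hset D hD] at hmem
        obtain ⟨δ, hδ, heq⟩ := hmem
        rw [List.map_append] at heq
        obtain ⟨h1, h2⟩ := List.append_inj' heq (by simp)
        refine ⟨δ, hδ, h1.symm, ?_⟩
        simpa using h2.symm
    apply Set.Subset.antisymm
    · rintro ⟨t, m⟩ ⟨γ', hγ', ht, hgr⟩
      rw [key t] at hgr
      obtain ⟨δ, hδ, hδx, hδy⟩ := hgr.1
      exact ⟨δ, hδ, hδx.symm, hgr⟩
    · rintro ⟨t, m⟩ ⟨γ', hγ', ht, hgr⟩
      rw [← key t] at hgr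
      obtain ⟨δ, hδ, hδx, hδy⟩ := hgr.1
      exact ⟨δ, hδ, hδx.symm, hgr⟩


end CQMax
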